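/- arXiv:2007.13175 — 2 statements merged into one kernel-verified Lean document; each statement's English description precedes it below -/
import Mathlib

section
/- If n parties contain at most f < n/2 faulty parties, and the parties are partitioned into two sets of sizes ⌈n/2⌉ and ⌊n/2⌋, then at least one of the two sets Q satisfies: the number of faulty parties in Q is at most ⌊(|Q|−1)/2⌋ (i.e., honest parties form a strict majority in that set). -/
/-! If both halves had `2 |F ∩ Q| ≥ |Q|`, adding the two inequalities over the partition
would give `2 |F| ≥ n`. -/

open Finset

theorem Nat.le_sub_one_div_two_of_two_mul_lt {a b : ℕ} (h : 2 * a < b) : a ≤ (b - 1) / 2 := by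
  omega

theorem Finset.two_mul_card_inter_lt_or_of_disjoint {α : Type*} [DecidableEq α]
    {F s t : Finset α} (hst : Disjoint s t) (h : 2 * #(F ∩ (s ∪ t)) < #(s ∪ t)) :
    2 * #(F ∩ s) < #s ∨ 2 * #(F ∩ t) < #t := by
  rw [inter_union_distrib_left, card_union_of_disjoint (hst.mono inter_subset_right
    inter_subset_right), card_union_of_disjoint hst] at h
  omega

theorem one_half_has_minority_faults_general (n : ℕ) (F Q₁ Q₂ : Finset (Fin n))
    (hf : 2 * F.card < n)
    (hdisj : Disjoint Q₁ Q₂) (hunion : Q₁ ∪ Q₂ = Finset.univ) :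
    (F ∩ Q₁).card ≤ (Q₁.card - 1) / 2 ∨ (F ∩ Q₂).card ≤ (Q₂.card - 1) / 2 := by
  have hF : 2 * #(F ∩ (Q₁ ∪ Q₂)) < #(Q₁ ∪ Q₂) := by
    rwa [hunion, inter_univ, card_univ, Fintype.card_fin]
  exact (two_mul_card_inter_lt_or_of_disjoint hdisj hF).imp
    Nat.le_sub_one_div_two_of_two_mul_lt Nat.le_sub_one_div_two_of_two_mul_lt

/-- If `n` parties contain `f < n/2` faulty parties and are partitioned into
halves of sizes `⌈n/2⌉` and `⌊n/2⌋`, then one half `Q` has at most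
`⌊(|Q|−1)/2⌋` faulty parties. -/
theorem one_half_has_minority_faults (n : ℕ) (F Q₁ Q₂ : Finset (Fin n))
    (hf : 2 * F.card < n)
    (hcard₁ : Q₁.card = (n + 1) / 2) (hcard₂ : Q₂.card = n / 2)
    (hdisj : Disjoint Q₁ Q₂) (hunion : Q₁ ∪ Q₂ = Finset.univ) :
    (F ∩ Q₁).card ≤ (Q₁.card - 1) / 2 ∨ (F ∩ Q₂).card ≤ (Q₂.card - 1) / 2 :=
  one_half_has_minority_faults_general n F Q₁ Q₂ hf hdisj hunion
end

section
/- Validity of the expander GBA: if all honest parties (at least n − f of n, f ≤ (1/2 − ε)n) input the same value v, then: (1) an echo-certificate forms only for v; (2) all honest parties send vote-1 for v, so a vote1-certificate for v forms and none forms for v' ≠ v; (3) all honest parties propagate C¹(v) and vote-2 for v, so C²(v) forms; (4) all honest parties output (v, 1). -/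
/-! Since `2f < n`, a quorum of `n - f` signers is larger than the faulty set, so every
certificate contains an honest signature; and the honest parties, at least `n - f`, alone form a
quorum. Hence honest behaviour pins every certificate to `v` and produces the
certificates for `v`, stage by stage. -/

def cert {V : Type} (n f : ℕ) (sig : Fin n → V → Prop) (w : V) : Prop :=
  ∃ Q : Finset (Fin n), n - f ≤ Q.card ∧ ∀ r ∈ Q, sig r w

lemma two_mul_lt_of_le_half_sub_mul {n f : ℕ} (hn : 0 < n) {ε : ℝ} (hε : 0 < ε)
    (hf : (f : ℝ) ≤ (1 / 2 - ε) * n) : 2 * f < n := by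
  have : (2 * f : ℝ) < n := by nlinarith [mul_pos hε (Nat.cast_pos.mpr hn)]
  exact_mod_cast this

section

variable {V : Type} {n f : ℕ} {F : Finset (Fin n)} {sig : Fin n → V → Prop} {w : V}

lemma le_card_compl_of_card_le (hF : F.card ≤ f) : n - f ≤ Fᶜ.card := by
  rw [Finset.card_compl, Fintype.card_fin]
  omega

lemma cert_of_forall_notMem (hF : F.card ≤ f) (h : ∀ r ∉ F, sig r w) : cert n f sig w :=
  ⟨Fᶜ, le_card_compl_of_card_le hF, fun r hr => h r (Finset.mem_compl.mp hr)⟩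

lemma cert.exists_notMem (h2f : 2 * f < n) (hF : F.card ≤ f) (hw : cert n f sig w) :
    ∃ r ∉ F, sig r w := by
  obtain ⟨Q, hQ, hsig⟩ := hw
  obtain ⟨r, hr⟩ : (Q \ F).Nonempty := by
    rw [← Finset.card_pos]
    have := Finset.le_card_sdiff F Q
    omega
  rw [Finset.mem_sdiff] at hr
  exact ⟨r, hr.2, hsig r hr.1⟩

lemma cert.imp_of_forall_notMem {P : V → Prop} (h2f : 2 * f < n) (hF : F.card ≤ f)
    (honest : ∀ r ∉ F, ∀ u, sig r u → P u) (hw : cert n f sig w) : P w := by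
  obtain ⟨r, hr, hsig⟩ := hw.exists_notMem h2f hF
  exact honest r hr w hsig

end

/-- Validity of the expander GBA: if all honest parties input the same
value `v` and follow the protocol rules of Figure 3, then (1) echo-certificates
form only for `v`; (2) all honest parties vote-1 for `v`, a vote1-certificate
for `v` forms and none forms for `v' ≠ v`; (3) a vote2-certificate for `v`
forms; (4) all honest parties output `(v, 1)`. -/
theorem expander_gba_validity {V : Type} (n f : ℕ) (hn : 0 < n) (ε : ℝ)
    (hε : 0 < ε) (hf : (f : ℝ) ≤ (1 / 2 - ε) * n)
    (F : Finset (Fin n)) (hF : F.card ≤ f)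
    (echo vote1 vote2 vote3 : Fin n → V → Prop)
    (out : Fin n → V × Bool) (v : V)
    -- honest parties echo exactly their common input `v`
    (hecho_send : ∀ r : Fin n, r ∉ F → echo r v)
    (hecho_only : ∀ r : Fin n, r ∉ F → ∀ w, echo r w → w = v)
    -- honest parties vote-1 for `v` when the echo-certificate for `v` is unique
    (hv1_send : ∀ r : Fin n, r ∉ F →
      (cert n f echo v ∧ ∀ w, cert n f echo w → w = v) → vote1 r v)
    (hv1_only : ∀ r : Fin n, r ∉ F → ∀ w, vote1 r w → cert n f echo w)
    -- honest parties vote-2 and vote-3 for `v` upon a vote1-certificate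
    (hv2_send : ∀ r : Fin n, r ∉ F → cert n f vote1 v → vote2 r v)
    (hv3_send : ∀ r : Fin n, r ∉ F → cert n f vote1 v → vote3 r v)
    -- output rule: value from `f+1` vote-3 messages, grade 1 from `C²(v)`
    (hout : ∀ r : Fin n, r ∉ F →
      (∃ B : Finset (Fin n), f + 1 ≤ B.card ∧ ∀ s ∈ B, vote3 s v) →
      cert n f vote2 v → out r = (v, true)) :
    (∀ w, cert n f echo w → w = v) ∧
    (∀ r : Fin n, r ∉ F → vote1 r v) ∧
    cert n f vote1 v ∧ (∀ w, cert n f vote1 w → w = v) ∧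
    cert n f vote2 v ∧
    (∀ r : Fin n, r ∉ F → out r = (v, true)) := by
  have h2f := two_mul_lt_of_le_half_sub_mul hn hε hf
  have echo_unique : ∀ w, cert n f echo w → w = v := fun w hw =>
    hw.imp_of_forall_notMem (P := (· = v)) h2f hF hecho_only
  have vote1_honest : ∀ r ∉ F, vote1 r v := fun r hr =>
    hv1_send r hr ⟨cert_of_forall_notMem hF hecho_send, echo_unique⟩
  have vote1_cert : cert n f vote1 v := cert_of_forall_notMem hF vote1_honest
  have vote1_unique : ∀ w, cert n f vote1 w → w = v := fun w hw =>
    echo_unique w (hw.imp_of_forall_notMem (P := cert n f echo) h2f hF hv1_only)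
  have vote2_cert : cert n f vote2 v :=
    cert_of_forall_notMem hF fun r hr => hv2_send r hr vote1_cert
  have vote3_quorum : ∃ B : Finset (Fin n), f + 1 ≤ B.card ∧ ∀ s ∈ B, vote3 s v :=
    ⟨Fᶜ, by have := le_card_compl_of_card_le (n := n) hF; omega,
      fun s hs => hv3_send s (Finset.mem_compl.mp hs) vote1_cert⟩
  exact ⟨echo_unique, vote1_honest, vote1_cert, vote1_unique, vote2_cert,
    fun r hr => hout r hr vote3_quorum vote2_cert⟩
end
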